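/- Full cross-entropy proposition: let p be a probability vector, y one-hot with pᵀy > 0, r = y − p, J : ℝⁿ → ℝᶜ linear, H = diag(p) − ppᵀ, and suppose δᵀ(JᵀHJ)δ ≤ 2(γ + e) with γ, e ≥ 0. Then |δᵀJᵀr| ≤ √( (2/(pᵀy)) (γ + e) ). -/

import Mathlib

open Matrix

theorem stmt_10 {c n : ℕ} (p : Fin c → ℝ) (hp : ∀ i, 0 ≤ p i) (hsum : ∑ i, p i = 1)
    (t : Fin c) (y : Fin c → ℝ) (hy : y = Pi.single t 1) (hpy : p ⬝ᵥ y > 0)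
    (r : Fin c → ℝ) (hr : r = y - p) (J : Matrix (Fin c) (Fin n) ℝ)
    (H : Matrix (Fin c) (Fin c) ℝ) (hH : H = Matrix.diagonal p - Matrix.vecMulVec p p)
    (δ : Fin n → ℝ) (γ e : ℝ) (hγ : 0 ≤ γ) (he : 0 ≤ e)
    (hcurv : δ ⬝ᵥ (Jᵀ * H * J).mulVec δ ≤ 2 * (γ + e)) :
    |δ ⬝ᵥ Jᵀ.mulVec r| ≤ Real.sqrt ((2 / (p ⬝ᵥ y)) * (γ + e)) := by
  subst hy hr hH
  set z : Fin c → ℝ := J.mulVec δ with hz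
  have hpt : p ⬝ᵥ Pi.single t 1 = p t := by
    simp [dotProduct, Pi.single_apply, mul_ite]
  have hpt0 : 0 < p t := by rwa [hpt] at hpy
  set m : ℝ := ∑ i, p i * z i with hm
  -- rewrite the linear term
  have hlin : δ ⬝ᵥ Jᵀ.mulVec (Pi.single t 1 - p) = z t - m := by
    rw [Matrix.dotProduct_mulVec, Matrix.vecMul_transpose]
    simp [dotProduct, Pi.single_apply, mul_ite, mul_sub, Finset.sum_sub_distrib, hm,
      mul_comm]
    rfl
  -- rewrite the quadratic term
  have hquad : δ ⬝ᵥ (Jᵀ * (Matrix.diagonal p - Matrix.vecMulVec p p) * J).mulVec δ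
      = ∑ i, p i * z i ^ 2 - m ^ 2 := by
    rw [← Matrix.mulVec_mulVec, ← Matrix.mulVec_mulVec, Matrix.dotProduct_mulVec,
      Matrix.vecMul_transpose]
    have h1 : z ⬝ᵥ (Matrix.diagonal p).mulVec z = ∑ i, p i * z i ^ 2 := by
      simp [dotProduct, Matrix.mulVec_diagonal]
      exact Finset.sum_congr rfl fun i _ => by ring
    have h2 : z ⬝ᵥ (Matrix.vecMulVec p p).mulVec z = m ^ 2 := by
      simp only [dotProduct, Matrix.mulVec, Matrix.vecMulVec_apply, hm]
      rw [show (∑ i, p i * z i) ^ 2 = (∑ i, p i * z i) * (∑ j, p j * z j) from sq _]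
      rw [Finset.sum_mul]
      refine Finset.sum_congr rfl fun i _ => ?_
      rw [Finset.mul_sum, Finset.mul_sum]
      refine Finset.sum_congr rfl fun j _ => ?_
      ring
    rw [Matrix.sub_mulVec, dotProduct_sub, h1, h2]
  rw [hlin, hpt]
  rw [hquad] at hcurv
  have hexp : ∑ i, p i * (z i - m) ^ 2 = ∑ i, p i * z i ^ 2 - m ^ 2 := by
    have h3 : ∀ i ∈ Finset.univ, p i * (z i - m) ^ 2
        = p i * z i ^ 2 - 2 * m * (p i * z i) + m ^ 2 * p i := fun i _ => by ring
    rw [Finset.sum_congr rfl h3]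
    rw [Finset.sum_add_distrib, Finset.sum_sub_distrib, ← Finset.mul_sum, ← Finset.mul_sum,
      hsum, ← hm]
    ring
  have hsingle : p t * (z t - m) ^ 2 ≤ ∑ i, p i * (z i - m) ^ 2 := by
    refine Finset.single_le_sum (f := fun i => p i * (z i - m) ^ 2) (fun i _ => ?_) (Finset.mem_univ t)
    have := hp i; positivity
  rw [hexp] at hsingle
  have hsq : (z t - m) ^ 2 ≤ (2 / p t) * (γ + e) := by
    rw [div_mul_eq_mul_div, le_div_iff₀ hpt0]
    nlinarith
  calc |z t - m| = Real.sqrt ((z t - m) ^ 2) := (Real.sqrt_sq_eq_abs _).symm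
    _ ≤ Real.sqrt ((2 / p t) * (γ + e)) := Real.sqrt_le_sqrt hsq
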